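/- arXiv:0707.1109 — 2 statements merged into one kernel-verified Lean document; each statement's English description precedes it below -/
import Mathlib

section
/- Let a and b be non-commuting elements of a free group F with a fixed free generating set, and let k be a positive integer. Then at least one of the four elements a, b, a^{20k} b a^{-20k}, b^{20k} a b^{-20k} has wing of length at least k. -/
/-- The formal inverse of a word. -/
def wInv {α : Type*} (W : List (α × Bool)) : List (α × Bool) :=
  (W.map fun p => (p.1, !p.2)).reverse

/-- A word is reduced iff it is the reduced word of the free-group element it represents. -/
def IsReducedWord {α : Type*} [DecidableEq α] (W : List (α × Bool)) : Prop :=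
  (FreeGroup.mk W).toWord = W

/-!
Write `a = X A X⁻¹` and `b = Y B Y⁻¹` with `A`, `B` cyclically reduced, `|X|, |Y| < k` and
`|B| ≤ |A|`, and let `N = 20k`. The reduced word `Z` of `a^N Y` agrees with `X A^N X⁻¹` except
for its last `< k` letters. Reducing `Z B Z⁻¹` to `Z₁ B₁ Z₁⁻¹` cancels a suffix `T` of `Z = Z₁ T`
which is a suffix of a power of `B` or `B⁻¹`. If `|Z₁| < k`, then `T` contains a window of
length `|A| + |B|` inside the `A^N` part of `Z`. There the word has two periods: a rotation of `A`
and a rotation of `B^{±1}`, which represent the conjugates of `a` and of `a^N b^{±1} a^{-N}`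
by the same element. Two periods of a word whose lengths add up to at most its length commute as
words, so `a` commutes with `a^N b^{±1} a^{-N}`, hence with `b`.
-/

open List

namespace List

variable {β : Type*} {C D L M M' T R : List β}

/-! `M <+: C ++ M` says that `M` is a prefix of `C C C ⋯`, i.e. `M` has period `C`. -/

theorem prefix_append_self_of_prefix (h : M' <+: M) (hM : M <+: C ++ M) : M' <+: C ++ M' :=
  prefix_of_prefix_length_le (h.trans hM) ((prefix_append_right_inj C).2 h) (by simp)

theorem append_prefix_of_prefix_append_self (hM : M <+: C ++ M) (hL : L <+: M)
    (hlen : C.length + L.length ≤ M.length) : C ++ L <+: M :=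
  prefix_of_prefix_length_le ((prefix_append_right_inj C).2 hL) hM (by simpa using hlen)

theorem append_comm_of_prefix_append_self (hC : M <+: C ++ M) (hD : M <+: D ++ M)
    (hlen : C.length + D.length ≤ M.length) : C ++ D = D ++ C := by
  have hCM : C <+: M := by
    simpa using append_prefix_of_prefix_append_self hC (nil_prefix (l := M)) (by simp; omega)
  have hDM : D <+: M := by
    simpa using append_prefix_of_prefix_append_self hD (nil_prefix (l := M)) (by simp; omega)
  refine (prefix_of_prefix_length_le (append_prefix_of_prefix_append_self hC hDM hlen)
    (append_prefix_of_prefix_append_self hD hCM (by omega)) (by simp; omega)).eq_of_length ?_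
  simp [Nat.add_comm]

theorem flatten_replicate_prefix_append_self (L : List β) (n : ℕ) :
    (replicate n L).flatten <+: L ++ (replicate n L).flatten := by
  rw [← flatten_cons, ← replicate_succ, replicate_succ', flatten_concat]
  exact prefix_append _ _

theorem IsSuffix.append_singleton_rotate {x : β} (h : T <:+ T ++ (x :: R)) :
    T ++ [x] <:+ T ++ [x] ++ (R ++ [x]) := by
  obtain ⟨Q, hQ⟩ := h
  exact ⟨Q, by rw [← append_assoc, hQ]; simp⟩

end List

namespace FreeGroup

section Periods

variable {α : Type*} {x : α × Bool} {C M P R T V X : List (α × Bool)}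

theorem mk_cons (x : α × Bool) (L : List (α × Bool)) : mk (x :: L) = mk [x] * mk L := by
  rw [mul_mk]; rfl

theorem mk_inv_singleton (x : α × Bool) : mk [(x.1, !x.2)] = (mk [x])⁻¹ := by
  rw [inv_mk]; rfl

theorem exists_rotate_of_cons_prefix (h : x :: M <+: C ++ x :: M) :
    ∃ C', C'.length = C.length ∧ M <+: C' ++ M ∧ mk C' = (mk [x])⁻¹ * mk C * mk [x] := by
  rcases C with _ | ⟨y, C⟩
  · exact ⟨[], rfl, prefix_rfl, by rw [← one_eq_mk]; group⟩
  · obtain ⟨rfl, h⟩ := cons_prefix_cons.1 h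
    refine ⟨C ++ [x], by simp, by simpa using h, ?_⟩
    rw [← mul_mk, mk_cons x C]
    group

theorem exists_drop_prefix_append_self (hM : M <+: C ++ M) {s : ℕ} (hs : s ≤ M.length) :
    ∃ C', C'.length = C.length ∧ M.drop s <+: C' ++ M.drop s ∧
      mk C' = (mk (M.take s))⁻¹ * mk C * mk (M.take s) := by
  induction s generalizing M C with
  | zero => exact ⟨C, rfl, by simpa using hM, by simp [← one_eq_mk]⟩
  | succ s ih =>
    cases M with
    | nil => simp at hs
    | cons x M =>
      obtain ⟨C₁, hlen₁, hM₁, hmk₁⟩ := exists_rotate_of_cons_prefix hM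
      obtain ⟨C', hlen, hM', hmk⟩ := ih hM₁ (by simpa using hs)
      refine ⟨C', hlen.trans hlen₁, by simpa using hM', ?_⟩
      rw [hmk, hmk₁, take_succ_cons, mk_cons x (take s M)]
      group

theorem exists_drop_prefix_append_self_of_prefix (hR : R <+: C ++ R) (hV : V <+: X ++ R)
    {s : ℕ} (hX : X.length ≤ s) (hs : s ≤ V.length) :
    ∃ C', C'.length = C.length ∧ V.drop s <+: C' ++ V.drop s ∧
      mk C' = (mk (V.take s))⁻¹ * (mk X * mk C * (mk X)⁻¹) * mk (V.take s) := by
  obtain ⟨t, ht⟩ := hV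
  have hsR : s - X.length ≤ R.length := by
    have := congrArg length ht
    simp at this
    omega
  have hdrop : V.drop s ++ t = R.drop (s - X.length) := by
    rw [← drop_append_of_le_length hs, ht, drop_append, drop_eq_nil_of_le hX, nil_append]
  have htake : V.take s = X ++ R.take (s - X.length) := by
    rw [← take_append_of_le_length hs, ht, take_append, take_of_length_le hX]
  obtain ⟨C', hlen, hper, hmk⟩ := exists_drop_prefix_append_self hR hsR
  refine ⟨C', hlen, prefix_append_self_of_prefix (hdrop ▸ prefix_append _ _) hper, ?_⟩
  rw [hmk, htake, ← mul_mk]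
  group

/-- `V` runs along the axes `X₁ C₁^∞` and `X₂ C₂^∞` of both conjugates; a common segment
longer than the two periods makes them commute. -/
theorem commute_of_prefix_window {X₁ X₂ R₁ R₂ C₁ C₂ : List (α × Bool)} {s : ℕ}
    (hR₁ : R₁ <+: C₁ ++ R₁) (hR₂ : R₂ <+: C₂ ++ R₂) (hV₁ : V <+: X₁ ++ R₁) (hV₂ : V <+: X₂ ++ R₂)
    (hX₁ : X₁.length ≤ s) (hX₂ : X₂.length ≤ s) (hlen : s + C₁.length + C₂.length ≤ V.length) :
    Commute (mk X₁ * mk C₁ * (mk X₁)⁻¹) (mk X₂ * mk C₂ * (mk X₂)⁻¹) := by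
  obtain ⟨D₁, hlen₁, hD₁, hmk₁⟩ := exists_drop_prefix_append_self_of_prefix hR₁ hV₁ hX₁ (by omega)
  obtain ⟨D₂, hlen₂, hD₂, hmk₂⟩ := exists_drop_prefix_append_self_of_prefix hR₂ hV₂ hX₂ (by omega)
  have hcomm := congrArg mk (append_comm_of_prefix_append_self hD₁ hD₂ (by simp; omega))
  rw [← mul_mk, ← mul_mk, hmk₁, hmk₂] at hcomm
  rw [← Commute.conj_iff (mk (V.take s))⁻¹, inv_inv]
  exact hcomm

theorem exists_prefix_append_self_of_suffix_append_self (h : T <:+ T ++ P) :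
    ∃ Q, Q.length = P.length ∧ T <+: Q ++ T ∧ mk Q = mk T * mk P * (mk T)⁻¹ := by
  obtain ⟨Q, hQ⟩ := h
  refine ⟨Q, ?_, hQ ▸ prefix_append T P, eq_mul_inv_of_mul_eq (by rw [mul_mk, mul_mk, hQ])⟩
  have := congrArg length hQ
  simp only [length_append] at this
  omega

end Periods

section Reduced

variable {α : Type*} {x y : α × Bool} {L L₁ L₂ R R' T : List (α × Bool)}

theorem isReduced_invRev (h : IsReduced L) : IsReduced (invRev L) := by
  classical
  rw [isReduced_iff_reduce_eq] at h ⊢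
  rw [reduce_invRev, h]

theorem IsReduced.append_cons (h₁ : IsReduced (L₁ ++ [x])) (h₂ : IsReduced (y :: L₂))
    (hxy : y ≠ (x.1, !x.2)) : IsReduced (L₁ ++ [x] ++ y :: L₂) := by
  refine isChain_append.2 ⟨h₁, h₂, ?_⟩
  simp only [getLast?_concat, Option.mem_def, Option.some.injEq, head?_cons, forall_eq']
  intro h
  by_contra h'
  exact hxy (Prod.ext h.symm (Bool.eq_not_of_ne (Ne.symm h')))

theorem IsReduced.append_invRev {Z : List (α × Bool)} {z : α × Bool}
    (h : IsReduced (Z ++ [x] ++ L ++ [z])) (hz : z ≠ x) :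
    IsReduced (Z ++ [x] ++ L ++ [z] ++ invRev (Z ++ [x])) := by
  have e : invRev (Z ++ [x]) = (x.1, !x.2) :: invRev Z := by simp [invRev]
  have hZ := isReduced_invRev (h.infix ⟨[], L ++ [z], by simp⟩ : IsReduced (Z ++ [x]))
  rw [e] at hZ ⊢
  exact h.append_cons hZ fun h' => hz (by simp_all [Prod.ext_iff])

theorem isCyclicallyReduced_iff_isReduced_append_self :
    IsCyclicallyReduced L ↔ IsReduced (L ++ L) := by
  simp [isCyclicallyReduced_iff, IsReduced, isChain_append]

theorem IsCyclicallyReduced.append_swap (h : IsCyclicallyReduced (L₁ ++ L₂)) :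
    IsCyclicallyReduced (L₂ ++ L₁) := by
  rw [isCyclicallyReduced_iff_isReduced_append_self]
  exact (h.flatten_replicate 3).isReduced.infix ⟨L₁, L₂, by simp [replicate_succ]⟩

theorem IsReduced.exists_cancel : ∀ {L₂}, IsReduced L₁ → IsReduced L₂ →
    ∃ U S V, L₁ = U ++ S ∧ L₂ = invRev S ++ V ∧ IsReduced (U ++ V) := by
  induction L₁ using List.reverseRecOn with
  | nil => exact fun {L₂} _ h₂ => ⟨[], [], L₂, rfl, rfl, h₂⟩
  | append_singleton L₁ x ih =>
    intro L₂ h₁ h₂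
    cases L₂ with
    | nil => exact ⟨L₁ ++ [x], [], [], by simp, rfl, by simpa using h₁⟩
    | cons y L₂ =>
      by_cases hxy : y = (x.1, !x.2)
      · obtain ⟨U, S, V, rfl, rfl, hUV⟩ :=
          ih (L₂ := L₂) (h₁.infix ⟨[], [x], rfl⟩) (h₂.infix ⟨[y], [], by simp⟩)
        exact ⟨U, S ++ [x], V, by simp, by simp [invRev, hxy], hUV⟩
      · exact ⟨L₁ ++ [x], [], y :: L₂, by simp, rfl, h₁.append_cons h₂ hxy⟩

theorem suffix_append_singleton_of_isReduced (hT : IsReduced (T ++ [x]))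
    (h : T <:+ T ++ (x :: R) ∨ T <:+ T ++ (R' ++ [(x.1, !x.2)])) :
    T ++ [x] <:+ T ++ [x] ++ (R ++ [x]) := by
  rcases h with h | h
  · exact h.append_singleton_rotate
  rcases eq_nil_or_concat T with rfl | ⟨T, y, rfl⟩
  · exact ⟨x :: R, by simp⟩
  have hy : y = (x.1, !x.2) := by simpa using h.getLast (by simp)
  have := (hT.infix ⟨T, [], by simp⟩ : IsReduced [y, x])
  subst hy
  simp at this

end Reduced

section Words

variable {α : Type*} [DecidableEq α]

theorem toWord_mul_take (g h : FreeGroup α) {n : ℕ}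
    (hn : n + h.toWord.length ≤ g.toWord.length) : (g * h).toWord.take n = g.toWord.take n := by
  obtain ⟨U, S, V, hg, hh, hUV⟩ :=
    IsReduced.exists_cancel (L₁ := g.toWord) (L₂ := h.toWord) isReduced_toWord isReduced_toWord
  have hgh : g * h = mk (U ++ V) := by
    rw [← mk_toWord (x := g), ← mk_toWord (x := h), hg, hh]
    simp only [← mul_mk, ← inv_mk]
    group
  have hS : S.length ≤ h.toWord.length := by simp [hh, invRev_length]
  have hU : n ≤ U.length := by have := congrArg length hg; simp at this; omega
  rw [hgh, toWord_mk, hUV.reduce_eq, hg, take_append_of_le_length hU, take_append_of_le_length hU]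

/-- `T` is the part of `Z` cancelled against powers of `B` or `B⁻¹`; `T <:+ T ++ P` says that
`T` is a suffix of a power of `P`. -/
theorem exists_toWord_conj_eq {Z : List (α × Bool)} (hZ : IsReduced Z) :
    ∀ {B}, IsCyclicallyReduced B → ∃ Z₁ T B₁, Z = Z₁ ++ T ∧
      (T <:+ T ++ B ∨ T <:+ T ++ invRev B) ∧ IsCyclicallyReduced B₁ ∧
      (mk Z * mk B * (mk Z)⁻¹).toWord = Z₁ ++ B₁ ++ invRev Z₁ := by
  induction Z using List.reverseRecOn with
  | nil =>
    refine fun {B} hB => ⟨[], [], B, rfl, .inl (by simp), hB, ?_⟩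
    simp [← one_eq_mk, toWord_mk, hB.isReduced.reduce_eq]
  | append_singleton Z x ih =>
    intro B hB
    have hZ₀ : IsReduced Z := hZ.infix ⟨[], [x], rfl⟩
    rcases B with _ | ⟨b, C⟩
    · refine ⟨[], Z ++ [x], [], by simp, .inl (by simp), .nil, ?_⟩
      rw [← one_eq_mk, mul_one, mul_inv_cancel, toWord_one]
      simp
    by_cases hb : b = (x.1, !x.2)
    · subst hb
      obtain ⟨Z₁, T, B₁, rfl, hT, hB₁, hw⟩ := ih hZ₀ (hB.append_swap (L₁ := [_]) (L₂ := C))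
      refine ⟨Z₁, T ++ [x], B₁, by simp, .inr ?_, hB₁, ?_⟩
      · have e : invRev (C ++ [(x.1, !x.2)]) = x :: invRev C := by simp [invRev]
        rw [e] at hT
        simpa [invRev] using suffix_append_singleton_of_isReduced
          (hZ.infix ⟨Z₁, [], by simp⟩) hT.symm
      · rw [← hw, ← mul_mk (L₁ := Z₁ ++ T), mk_cons _ C, ← mul_mk (L₁ := C), mk_inv_singleton]
        group
    have h₁ : IsReduced (Z ++ [x] ++ b :: C) := hZ.append_cons hB.isReduced hb
    obtain ⟨C', z, hCz⟩ := (eq_nil_or_concat' (b :: C)).resolve_left (cons_ne_nil b C)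
    rw [hCz] at hB h₁ ⊢
    by_cases hz : z = x
    · subst hz
      obtain ⟨Z₁, T, B₁, rfl, hT, hB₁, hw⟩ := ih hZ₀ (hB.append_swap (L₂ := [_]) (L₁ := C'))
      refine ⟨Z₁, T ++ [z], B₁, by simp, .inl ?_, hB₁, ?_⟩
      · have e : invRev ([z] ++ C') = invRev C' ++ [(z.1, !z.2)] := by simp [invRev]
        rw [e] at hT
        exact suffix_append_singleton_of_isReduced (hZ.infix ⟨Z₁, [], by simp⟩) hT
      · rw [← hw, ← mul_mk (L₁ := Z₁ ++ T), ← mul_mk (L₁ := C'), ← mul_mk (L₁ := [z])]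
        group
    refine ⟨Z ++ [x], [], C' ++ [z], by simp, .inl (by simp), hB, ?_⟩
    have := IsReduced.append_invRev (L := C') (by simpa using h₁) hz
    rw [inv_mk, mul_mk, mul_mk, toWord_mk, IsReduced.reduce_eq (by simpa using this)]

theorem exists_toWord_eq_conj (g : FreeGroup α) :
    ∃ X A, IsCyclicallyReduced A ∧ g.toWord = X ++ A ++ invRev X :=
  ⟨_, _, reduceCyclically.isCyclicallyReduced isReduced_toWord,
    (reduceCyclically.conj_conjugator_reduceCyclically _).symm⟩

theorem eq_conj_of_toWord_eq {g : FreeGroup α} {X A : List (α × Bool)}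
    (hg : g.toWord = X ++ A ++ invRev X) : g = mk X * mk A * (mk X)⁻¹ := by
  rw [inv_mk, mul_mk, mul_mk, ← hg, mk_toWord]

theorem toWord_pow_of_toWord_eq {g : FreeGroup α} {X A : List (α × Bool)}
    (hA : IsCyclicallyReduced A) (hg : g.toWord = X ++ A ++ invRev X) {n : ℕ} (hn : n ≠ 0) :
    (g ^ n).toWord = X ++ (replicate n A).flatten ++ invRev X := by
  have hred : IsReduced (X ++ (replicate n A).flatten ++ invRev X) :=
    (hg ▸ isReduced_toWord).append_flatten_replicate_append hA hn
  rw [← hred.reduce_eq, ← toWord_mk, eq_conj_of_toWord_eq hg, conj_pow, pow_mk, inv_mk, mul_mk,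
    mul_mk]

theorem commute_of_toWord_pow_mul_eq {g y : FreeGroup α} {X A Z₁ T Q : List (α × Bool)}
    {k N : ℕ} (hN : 4 * k ≤ N) (hA : IsCyclicallyReduced A) (hA₀ : A ≠ [])
    (hg : g.toWord = X ++ A ++ invRev X) (hZ : (g ^ N * y).toWord = Z₁ ++ T)
    (hTQ : T <+: Q ++ T) (hQA : Q.length ≤ A.length)
    (hX : X.length < k) (hy : y.toWord.length < k) (hZ₁ : Z₁.length < k) :
    Commute g (mk Z₁ * mk Q * (mk Z₁)⁻¹) := by
  have hW := toWord_pow_of_toWord_eq hA hg (n := N) (by omega)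
  have hWlen := congrArg length hW
  simp only [length_append, length_flatten, map_replicate, sum_replicate, smul_eq_mul,
    invRev_length] at hWlen
  have hA₁ : 1 ≤ A.length := length_pos_iff.2 hA₀
  have hNA : 4 * (k * A.length) ≤ N * A.length := by
    rw [← mul_assoc]; exact Nat.mul_le_mul_right _ hN
  have hkA : k + A.length ≤ k * A.length + 1 := by nlinarith
  -- the window `V` of length `|A| + |Q|` after `max |X| |Z₁|` lies in both periodic parts
  set n := max X.length Z₁.length + A.length + Q.length with hn
  set V := (g ^ N * y).toWord.take n
  have hV : V = (g ^ N).toWord.take n := toWord_mul_take _ _ (by omega)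
  have hVA : V <+: X ++ (replicate N A).flatten := by
    rw [hV, hW, take_append_of_le_length (by simp; omega)]
    exact take_prefix _ _
  have hVT : V <+: Z₁ ++ T := hZ ▸ take_prefix _ _
  rw [eq_conj_of_toWord_eq hg]
  exact commute_of_prefix_window (flatten_replicate_prefix_append_self A N) hTQ hVA hVT
    (le_max_left _ _) (le_max_right _ _) (by rw [hV, length_take]; omega)

end Words

end FreeGroup

theorem Commute.of_conj_pow {G : Type*} [Group G] {a g : G} {n : ℕ}
    (h : Commute a (a ^ n * g * (a ^ n)⁻¹)) : Commute a g := by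
  rwa [← Commute.conj_iff (a ^ n), show a ^ n * a * (a ^ n)⁻¹ = a by group]

open FreeGroup

section Wing

variable {α : Type*} [DecidableEq α]

def HasLongWing (k : ℕ) (h : FreeGroup α) : Prop :=
  ∃ X A : List (α × Bool), IsReducedWord X ∧ IsReducedWord (A ++ A) ∧
    h.toWord = X ++ A ++ wInv X ∧ k ≤ X.length

theorem isReducedWord_iff_isReduced {W : List (α × Bool)} : IsReducedWord W ↔ IsReduced W := by
  rw [IsReducedWord, toWord_mk, isReduced_iff_reduce_eq]

theorem hasLongWing_of_toWord_eq {k : ℕ} {h : FreeGroup α} {X A : List (α × Bool)}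
    (hA : IsCyclicallyReduced A) (hw : h.toWord = X ++ A ++ invRev X) (hk : k ≤ X.length) :
    HasLongWing k h :=
  ⟨X, A, isReducedWord_iff_isReduced.2
      ((isReduced_toWord (x := h)).infix ⟨[], A ++ invRev X, by rw [hw]; simp⟩),
    isReducedWord_iff_isReduced.2 (isCyclicallyReduced_iff_isReduced_append_self.1 hA), hw, hk⟩

theorem hasLongWing_conj_pow {a b : FreeGroup α} (hab : ¬Commute a b) {k N : ℕ} (hN : 4 * k ≤ N)
    {X A Y B : List (α × Bool)} (hA : IsCyclicallyReduced A) (ha : a.toWord = X ++ A ++ invRev X)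
    (hB : IsCyclicallyReduced B) (hb : b.toWord = Y ++ B ++ invRev Y)
    (hX : X.length < k) (hY : Y.length < k) (hBA : B.length ≤ A.length) :
    HasLongWing k (a ^ N * b * (a ^ N)⁻¹) := by
  have hA₀ : A ≠ [] := by
    rintro rfl
    apply hab
    rw [eq_conj_of_toWord_eq ha, ← one_eq_mk, mul_one, mul_inv_cancel]
    exact Commute.one_left b
  obtain ⟨Z₁, T, B₁, hZ, hT, hB₁, hc⟩ :=
    exists_toWord_conj_eq (isReduced_toWord (x := a ^ N * mk Y)) hB
  have hcb : mk (a ^ N * mk Y).toWord * mk B * (mk (a ^ N * mk Y).toWord)⁻¹ =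
      a ^ N * b * (a ^ N)⁻¹ := by
    rw [mk_toWord, eq_conj_of_toWord_eq hb]
    group
  refine hasLongWing_of_toWord_eq hB₁ (hcb ▸ hc) (not_lt.1 fun hZ₁ => hab ?_)
  obtain ⟨P, hPB, hTP, hP⟩ : ∃ P, P.length = B.length ∧ T <:+ T ++ P ∧
      (mk P = mk B ∨ mk P = (mk B)⁻¹) :=
    hT.elim (fun h => ⟨B, rfl, h, .inl rfl⟩)
      (fun h => ⟨invRev B, invRev_length, h, .inr inv_mk.symm⟩)
  obtain ⟨Q, hQP, hTQ, hmkQ⟩ := exists_prefix_append_self_of_suffix_append_self hTP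
  have hQ : mk Z₁ * mk Q * (mk Z₁)⁻¹ = a ^ N * (mk Y * mk P * (mk Y)⁻¹) * (a ^ N)⁻¹ := by
    have hZmk : mk Z₁ * mk T = a ^ N * mk Y := by rw [mul_mk, ← hZ, mk_toWord]
    rw [hmkQ, show a ^ N = mk Z₁ * mk T * (mk Y)⁻¹ by rw [hZmk]; group]
    group
  have hcomm := hQ ▸ commute_of_toWord_pow_mul_eq hN hA hA₀ ha hZ hTQ (by omega) hX
    (lt_of_le_of_lt norm_mk_le hY) hZ₁
  rcases hP with hP | hP
  · rw [hP, ← eq_conj_of_toWord_eq hb] at hcomm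
    exact hcomm.of_conj_pow
  · rw [hP, show mk Y * (mk B)⁻¹ * (mk Y)⁻¹ = b⁻¹ by rw [eq_conj_of_toWord_eq hb]; group] at hcomm
    exact Commute.inv_right_iff.1 hcomm.of_conj_pow

end Wing

theorem exists_long_wing_general {α : Type*} [DecidableEq α] (a b : FreeGroup α)
    (hab : a * b ≠ b * a) (k : ℕ) :
    ∃ h ∈ ({a, b, a ^ (20 * k) * b * (a ^ (20 * k))⁻¹,
        b ^ (20 * k) * a * (b ^ (20 * k))⁻¹} : Set (FreeGroup α)),
      ∃ X A : List (α × Bool), IsReducedWord X ∧ IsReducedWord (A ++ A) ∧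
        h.toWord = X ++ A ++ wInv X ∧ k ≤ X.length := by
  obtain ⟨X, A, hA, ha⟩ := exists_toWord_eq_conj a
  obtain ⟨Y, B, hB, hb⟩ := exists_toWord_eq_conj b
  by_cases hX : k ≤ X.length
  · exact ⟨a, by simp, hasLongWing_of_toWord_eq hA ha hX⟩
  by_cases hY : k ≤ Y.length
  · exact ⟨b, by simp, hasLongWing_of_toWord_eq hB hb hY⟩
  rw [not_le] at hX hY
  rcases le_total B.length A.length with hBA | hAB
  · exact ⟨_, by simp, hasLongWing_conj_pow (N := 20 * k) hab (by omega) hA ha hB hb hX hY hBA⟩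
  · exact ⟨_, by simp,
      hasLongWing_conj_pow (N := 20 * k) (Ne.symm hab) (by omega) hB hb hA ha hY hX hAB⟩

/-- If `a` and `b` do not commute in a free group, then for every positive integer `k`, one of
the four elements `a`, `b`, `a^{20k} b a^{-20k}`, `b^{20k} a b^{-20k}` has wing (the reduced
word `X` in the unique decomposition `X A X⁻¹`, `A` cyclically reduced) of length at least
`k`. -/
theorem exists_long_wing {α : Type*} [DecidableEq α] (a b : FreeGroup α)
    (hab : a * b ≠ b * a) (k : ℕ) (hk : 0 < k) :
    ∃ h ∈ ({a, b, a ^ (20 * k) * b * (a ^ (20 * k))⁻¹,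
        b ^ (20 * k) * a * (b ^ (20 * k))⁻¹} : Set (FreeGroup α)),
      ∃ X A : List (α × Bool), IsReducedWord X ∧ IsReducedWord (A ++ A) ∧
        h.toWord = X ++ A ++ wInv X ∧ k ≤ X.length :=
  exists_long_wing_general a b hab k
end

section
/- Let G be a countable group, H ⊆ G a cofinite subset (i.e., HJ = G for some finite J ⊆ G), and μ a nondegenerate probability measure on G. Then almost every path of the right random μ-walk on G visits H infinitely often. -/
open MeasureTheory ProbabilityTheory

/-- Position of the right random walk after `n` steps: the ordered product of the first `n`
increments. -/
def walk {G Ω : Type*} [Group G] (X : ℕ → Ω → G) (ω : Ω) (n : ℕ) : G :=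
  ((List.range n).map fun i => X i ω).prod

/-- `X` is a realization of the right random `μ`-walk increments: an i.i.d. sequence with
common distribution `μ`. -/
def IsRW {G Ω : Type*} [Group G] [MeasurableSpace G] [MeasurableSpace Ω]
    (μ : Measure G) (P : Measure Ω) (X : ℕ → Ω → G) : Prop :=
  (∀ i, Measurable (X i)) ∧ iIndepFun X P ∧
    ∀ i, Measure.map (X i) P = μ

/-- A measure on a group is nondegenerate if its support generates the group as a
semigroup. -/
def Nondeg {G : Type*} [Group G] [MeasurableSpace G] (μ : Measure G) : Prop :=
  ∀ g : G, ∃ l : List G, l ≠ [] ∧ (∀ x ∈ l, 0 < μ {x}) ∧ l.prod = g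

/-- A subset `H` of a group is cofinite if `H * J = G` for some finite `J`. -/
def Cofinite {G : Type*} [Group G] (H : Set G) : Prop :=
  ∃ J : Finset G, ∀ g : G, ∃ h ∈ H, ∃ j ∈ J, g = h * j

/-!
Write `g = h * j` with `h ∈ H` and `j` in the finite set `J`. By nondegeneracy `j⁻¹` is the
product of a word in the atoms of `μ`, and once the walk at `g` follows that word it lands in `H`.
Finitely many words suffice, so from every position some word of length at most `L` and
probability at least `δ > 0` leads into `H`. The increments after time `N` are independent of
the past, so whatever happened up to time `N`, the walk avoids `H` during `[N, N + L]` with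
conditional probability at most `1 - δ`. Avoiding `H` forever after time `M` therefore has
probability at most `(1 - δ) ^ t` for every `t`.
-/

open scoped ENNReal

section Walk

variable {G Ω : Type*} {X : ℕ → Ω → G} {N : ℕ} {u : List G}

lemma walk_succ [Group G] (X : ℕ → Ω → G) (ω : Ω) (n : ℕ) :
    walk X ω (n + 1) = walk X ω n * X n ω := by
  simp [walk, List.range_succ]

lemma walk_add [Group G] (X : ℕ → Ω → G) (ω : Ω) (a b : ℕ) :
    walk X ω (a + b) = walk X ω a * ((List.range b).map fun i => X (a + i) ω).prod := by
  simp [walk, List.range_add, Function.comp_def]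

def followsWord (X : ℕ → Ω → G) (N : ℕ) (u : List G) : Set Ω :=
  {ω | ∀ i : Fin u.length, X (N + i) ω = u[i]}

lemma followsWord_eq_iInter :
    followsWord X N u = ⋂ i : Fin u.length, X (N + i) ⁻¹' {u[i]} := by
  ext; simp [followsWord]

lemma walk_add_length_of_mem_followsWord [Group G] {ω : Ω} (hω : ω ∈ followsWord X N u) :
    walk X ω (N + u.length) = walk X ω N * u.prod := by
  rw [walk_add]
  congr
  exact List.ext_getElem (by simp) fun i _ hi => by simpa using hω ⟨i, hi⟩

def avoids [Group G] (X : ℕ → Ω → G) (H : Set G) (N L : ℕ) : Set Ω :=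
  {ω | ∀ m, N ≤ m → m ≤ N + L → walk X ω m ∉ H}

end Walk

section PastSigma

variable {G Ω : Type*} [mG : MeasurableSpace G] {X : ℕ → Ω → G}

abbrev pastSigma (X : ℕ → Ω → G) (N : ℕ) : MeasurableSpace Ω :=
  ⨆ i ∈ Set.Iio N, mG.comap (X i)

lemma pastSigma_mono (X : ℕ → Ω → G) : Monotone (pastSigma X) :=
  fun _ _ hNM => biSup_mono fun _ hi => lt_of_lt_of_le hi hNM

lemma pastSigma_le [MeasurableSpace Ω] (hX : ∀ i, Measurable (X i)) (N : ℕ) :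
    pastSigma X N ≤ ‹MeasurableSpace Ω› :=
  iSup₂_le fun i _ => (hX i).comap_le

lemma measurable_pastSigma {i N : ℕ} (hi : i < N) : Measurable[pastSigma X N] (X i) :=
  Measurable.of_comap_le (le_iSup₂ (f := fun j (_ : j ∈ Set.Iio N) => mG.comap (X j)) i hi)

variable [Group G] [Countable G] [MeasurableSingletonClass G]

lemma measurable_walk_pastSigma (N : ℕ) : Measurable[pastSigma X N] fun ω => walk X ω N := by
  induction N with
  | zero => exact measurable_const
  | succ N ih =>
    simp_rw [walk_succ]
    exact (measurable_of_countable fun p : G × G => p.1 * p.2).comp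
      ((ih.mono (pastSigma_mono X N.le_succ) le_rfl).prodMk
        (measurable_pastSigma N.lt_succ_self))

lemma measurableSet_avoids (H : Set G) (N L : ℕ) :
    MeasurableSet[pastSigma X (N + L)] (avoids X H N L) := by
  have : avoids X H N L = ⋂ m ∈ Set.Icc N (N + L), (fun ω => walk X ω m) ⁻¹' Hᶜ := by
    ext; simp [avoids]
  rw [this]
  exact MeasurableSet.biInter (Set.to_countable _) fun m hm =>
    (measurable_walk_pastSigma m).mono (pastSigma_mono X hm.2) le_rfl MeasurableSet.of_discrete

end PastSigma

section WordProb

variable {G : Type*} [MeasurableSpace G] {μ : Measure G}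

noncomputable def wordProb (μ : Measure G) (u : List G) : ℝ≥0∞ :=
  (u.map fun x => μ {x}).prod

lemma wordProb_pos {u : List G} (hu : ∀ x ∈ u, 0 < μ {x}) : 0 < wordProb μ u :=
  pos_iff_ne_zero.2 <| List.prod_ne_zero fun h0 => by
    obtain ⟨x, hxu, hx0⟩ := List.mem_map.1 h0
    exact (hu x hxu).ne' hx0

def UniformlyReachable [Group G] (μ : Measure G) (H : Set G) (L : ℕ) (δ : ℝ≥0∞) : Prop :=
  ∀ g : G, ∃ u : List G, u.length ≤ L ∧ g * u.prod ∈ H ∧ δ ≤ wordProb μ u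

lemma Cofinite.exists_uniformlyReachable [Group G] {H : Set G} (hH : Cofinite H)
    (hμ : Nondeg μ) : ∃ L δ, 0 < δ ∧ UniformlyReachable μ H L δ := by
  obtain ⟨J, hJ⟩ := hH
  choose w _ hw_pos hw_prod using hμ
  refine ⟨J.sup fun j => (w j⁻¹).length, J.inf fun j => wordProb μ (w j⁻¹),
    (Finset.lt_inf_iff ENNReal.zero_lt_top).2 fun j _ => wordProb_pos (hw_pos _), fun g => ?_⟩
  obtain ⟨h, hh, j, hj, rfl⟩ := hJ g
  exact ⟨w j⁻¹, Finset.le_sup (f := fun j => (w j⁻¹).length) hj,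
    by simpa [hw_prod] using hh, Finset.inf_le hj⟩

end WordProb

lemma measure_eq_tsum_inter_preimage_singleton {α β : Type*} [MeasurableSpace α]
    [MeasurableSpace β] [Countable β] [MeasurableSingletonClass β] (μ : Measure α) {f : α → β}
    (hf : Measurable f) (A : Set α) : μ A = ∑' b, μ (A ∩ f ⁻¹' {b}) := by
  have := tsum_measure_preimage_singleton (μ := μ.restrict A) Set.countable_univ
    fun b _ => hf (measurableSet_singleton b)
  simp only [Set.preimage_univ, Measure.restrict_apply_univ,
    Measure.restrict_apply (hf (measurableSet_singleton _))] at this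
  rw [← this, tsum_univ fun b => μ (f ⁻¹' {b} ∩ A)]
  simp_rw [Set.inter_comm]

section RandomWalk

variable {G Ω : Type*} [Group G] [MeasurableSpace G] [MeasurableSingletonClass G]
  [MeasurableSpace Ω] {μ : Measure G} {P : Measure Ω} {X : ℕ → Ω → G} {H : Set G} {L N : ℕ}
  {δ : ℝ≥0∞} {u : List G}

lemma measure_followsWord (hX : IsRW μ P X) : P (followsWord X N u) = wordProb μ u := by
  have hindep : iIndepFun (fun i : Fin u.length => X (N + i)) P :=
    hX.2.1.precomp fun i j h => Fin.ext (Nat.add_left_cancel h)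
  have hprod := hindep.measure_inter_preimage_eq_mul Finset.univ
    (sets := fun i => {u[i]}) fun _ _ => measurableSet_singleton _
  simp only [Finset.mem_univ, Set.iInter_true] at hprod
  rw [followsWord_eq_iInter, hprod, wordProb, ← Fin.prod_univ_fun_getElem]
  refine Finset.prod_congr rfl fun i _ => ?_
  rw [← hX.2.2 (N + i), Measure.map_apply (hX.1 _) (measurableSet_singleton _)]
  rfl

lemma measure_inter_followsWord (hX : IsRW μ P X) {A : Set Ω}
    (hA : MeasurableSet[pastSigma X N] A) : P (A ∩ followsWord X N u) = P A * wordProb μ u := by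
  have hindep := indep_iSup_of_disjoint (fun i => (hX.1 i).comap_le)
    ((iIndepFun_iff_iIndep _ _ _).1 hX.2.1) (Set.Iio_disjoint_Ici (le_refl N))
  have hF : MeasurableSet[⨆ i ∈ Set.Ici N, MeasurableSpace.comap (X i) ‹_›]
      (followsWord X N u) := by
    rw [followsWord_eq_iInter]
    exact MeasurableSet.iInter fun i => measurableSet_singleton _ |>.preimage <|
      Measurable.of_comap_le <| le_iSup₂ (f := fun j (_ : j ∈ Set.Ici N) =>
        MeasurableSpace.comap (X j) ‹_›) (N + i) (Nat.le_add_right N i)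
  rw [(Indep_iff _ _ _).1 hindep A _ hA hF, measure_followsWord hX]

lemma measure_inter_avoids_le_of_walk_mul_mem (hX : IsRW μ P X) [IsFiniteMeasure P]
    {A : Set Ω} (hA : MeasurableSet[pastSigma X N] A) (hu : u.length ≤ L)
    (hAu : ∀ ω ∈ A, walk X ω N * u.prod ∈ H) :
    P (A ∩ avoids X H N L) ≤ (1 - wordProb μ u) * P A := by
  have hsub : A ∩ avoids X H N L ⊆ A \ (A ∩ followsWord X N u) :=
    fun ω ⟨hωA, hωav⟩ => ⟨hωA, fun ⟨_, hωu⟩ => hωav (N + u.length) (by omega) (by omega)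
      (walk_add_length_of_mem_followsWord hωu ▸ hAu ω hωA)⟩
  have hmeas : MeasurableSet (A ∩ followsWord X N u) := by
    rw [followsWord_eq_iInter]
    exact (pastSigma_le hX.1 N _ hA).inter
      (.iInter fun i => hX.1 _ (measurableSet_singleton _))
  calc P (A ∩ avoids X H N L) ≤ P (A \ (A ∩ followsWord X N u)) := measure_mono hsub
    _ = P A - P A * wordProb μ u := by
      rw [measure_sdiff Set.inter_subset_left hmeas.nullMeasurableSet (measure_ne_top P _),
        measure_inter_followsWord hX hA]
    _ = (1 - wordProb μ u) * P A := by
      rw [ENNReal.sub_mul fun _ _ => measure_ne_top P A, one_mul, mul_comm]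

variable [Countable G]

lemma measure_inter_avoids_le (hX : IsRW μ P X) [IsFiniteMeasure P]
    (hreach : UniformlyReachable μ H L δ) {E : Set Ω} (hE : MeasurableSet[pastSigma X N] E) :
    P (E ∩ avoids X H N L) ≤ (1 - δ) * P E := by
  have hwalk := measurable_walk_pastSigma (X := X) N
  have hfiber (g : G) : P (E ∩ avoids X H N L ∩ (fun ω => walk X ω N) ⁻¹' {g})
      ≤ (1 - δ) * P (E ∩ (fun ω => walk X ω N) ⁻¹' {g}) := by
    obtain ⟨u, hu, hgu, hδu⟩ := hreach g
    rw [Set.inter_right_comm]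
    calc _ ≤ (1 - wordProb μ u) * P (E ∩ (fun ω => walk X ω N) ⁻¹' {g}) :=
          measure_inter_avoids_le_of_walk_mul_mem hX
            (hE.inter (hwalk (measurableSet_singleton g))) hu
            fun ω hω => by rwa [show walk X ω N = g from hω.2]
      _ ≤ _ := by gcongr
  have hwalk' := hwalk.mono (pastSigma_le hX.1 N) le_rfl
  rw [measure_eq_tsum_inter_preimage_singleton P hwalk',
    measure_eq_tsum_inter_preimage_singleton P hwalk' E, ← ENNReal.tsum_mul_left]
  exact ENNReal.tsum_le_tsum hfiber

lemma measure_biInter_avoids_le (hX : IsRW μ P X) [IsProbabilityMeasure P]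
    (hreach : UniformlyReachable μ H L δ) (M t : ℕ) :
    P (⋂ k ∈ Finset.range t, avoids X H (M + k * L) L) ≤ (1 - δ) ^ t := by
  induction t with
  | zero => simp
  | succ t ih =>
    have hE : MeasurableSet[pastSigma X (M + t * L)]
        (⋂ k ∈ Finset.range t, avoids X H (M + k * L) L) :=
      Finset.measurableSet_biInter _ fun k hk => by
        have hkL := Nat.mul_le_mul_right L (Finset.mem_range.1 hk)
        rw [Nat.succ_mul] at hkL
        exact pastSigma_mono X (by omega) _ (measurableSet_avoids H (M + k * L) L)
    rw [Finset.range_add_one, Finset.set_biInter_insert, Set.inter_comm, pow_succ']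
    exact (measure_inter_avoids_le hX hreach hE).trans (by gcongr)

lemma measure_forall_ge_walk_notMem_eq_zero (hX : IsRW μ P X) [IsProbabilityMeasure P]
    (hreach : UniformlyReachable μ H L δ) (hδ : 0 < δ) (M : ℕ) :
    P {ω | ∀ n, M ≤ n → walk X ω n ∉ H} = 0 := by
  have hsub (t : ℕ) : {ω | ∀ n, M ≤ n → walk X ω n ∉ H}
      ⊆ ⋂ k ∈ Finset.range t, avoids X H (M + k * L) L :=
    fun ω hω => Set.mem_iInter₂.2 fun k _ m hm _ => hω m (by omega)
  refine le_antisymm (ge_of_tendsto' (ENNReal.tendsto_pow_atTop_nhds_zero_of_lt_one ?_)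
    fun t => (measure_mono (hsub t)).trans (measure_biInter_avoids_le hX hreach M t)) bot_le
  exact ENNReal.sub_lt_self ENNReal.one_ne_top one_ne_zero hδ.ne'

end RandomWalk

theorem cofinite_visited_infinitely_often_general {G : Type*} [Group G] [Countable G]
    [MeasurableSpace G] [MeasurableSingletonClass G]
    (H : Set G) (hH : Cofinite H)
    (μ : Measure G) (hμ : Nondeg μ)
    {Ω : Type*} [MeasurableSpace Ω] (P : Measure Ω) [IsProbabilityMeasure P]
    (X : ℕ → Ω → G) (hX : IsRW μ P X) :
    ∀ᵐ ω ∂P, {n : ℕ | walk X ω n ∈ H}.Infinite := by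
  obtain ⟨L, δ, hδ, hreach⟩ := hH.exists_uniformlyReachable hμ
  rw [ae_iff]
  refine measure_mono_null (fun ω hω => ?_) <|
    measure_iUnion_null (measure_forall_ge_walk_notMem_eq_zero hX hreach hδ)
  obtain ⟨M, hM⟩ := (Set.not_infinite.1 hω).bddAbove
  exact Set.mem_iUnion.2 ⟨M + 1, fun n hn hnH => by have := hM hnH; omega⟩

/-- If `H ⊆ G` is a cofinite subset of a countable group and `μ` is a nondegenerate
probability measure on `G`, then almost every path of the right random `μ`-walk visits `H`
infinitely often. -/
theorem cofinite_visited_infinitely_often {G : Type*} [Group G] [Countable G]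
    [MeasurableSpace G] [MeasurableSingletonClass G]
    (H : Set G) (hH : Cofinite H)
    (μ : Measure G) [IsProbabilityMeasure μ] (hμ : Nondeg μ)
    {Ω : Type*} [MeasurableSpace Ω] (P : Measure Ω) [IsProbabilityMeasure P]
    (X : ℕ → Ω → G) (hX : IsRW μ P X) :
    ∀ᵐ ω ∂P, {n : ℕ | walk X ω n ∈ H}.Infinite :=
  cofinite_visited_infinitely_often_general H hH μ hμ P X hX
end
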